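/- Let n be a positive integer and Θ a real n×1 matrix. Then α_×(Θ) ≥ α(Θ) ≥ (n·α_×(Θ) − 1) / (n(n−1)·α_×(Θ) + n² − n + 1), where if α_×(Θ) = +∞ the lower bound is interpreted as 1/(n(n−1)) when n ≥ 2 and as +∞ when n = 1. -/

import Mathlib

open MeasureTheory Filter Matrix

noncomputable section

/-- Geometric mean of the absolute values of the coordinates: Π(z). -/
def Pigeo {k : ℕ} (z : Fin k → ℝ) : ℝ := (∏ i, |z i|) ^ ((1:ℝ)/k)

/-- Geometric mean of `max 1 |z i|`: Π'(z). -/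
def Pigeo' {k : ℕ} (z : Fin k → ℝ) : ℝ := (∏ i, max 1 |z i|) ^ ((1:ℝ)/k)

/-- Coordinatewise cast of an integer vector to a real vector. -/
def ivec {k : ℕ} (x : Fin k → ℤ) : Fin k → ℝ := fun i => (x i : ℝ)

/-- The constant Δ_d = (2^{d-1}√d)⁻¹ · vol_{d-1}{x ∈ [-1,1]^d : x₁+⋯+x_d = 0}. -/
def Delta (d : ℕ) : ℝ :=
  ((2:ℝ) ^ (d - 1) * Real.sqrt d)⁻¹ *
    (μH[(d:ℝ) - 1] {x : EuclideanSpace ℝ (Fin d) | (∀ i, |x i| ≤ 1) ∧ ∑ i, x i = 0}).toReal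

/-- For every sufficiently large t there are x ∈ ℤ^m \ {0}, y ∈ ℤ^n with
Π'(x) ≤ t and Π(Θx − y) ≤ t^{−γ}. -/
def UnifMultApprox (n m : ℕ) (Θ : Matrix (Fin n) (Fin m) ℝ) (γ : ℝ) : Prop :=
  ∀ᶠ t : ℝ in Filter.atTop, ∃ x : Fin m → ℤ, ∃ y : Fin n → ℤ, x ≠ 0 ∧
    Pigeo' (ivec x) ≤ t ∧ Pigeo (Θ.mulVec (ivec x) - ivec y) ≤ t ^ (-γ)

/-- The uniform multiplicative Diophantine exponent α_×(Θ), as an extended real. -/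
def malpha (n m : ℕ) (Θ : Matrix (Fin n) (Fin m) ℝ) : EReal :=
  sSup {x : EReal | ∃ γ : ℝ, x = (γ : EReal) ∧ UnifMultApprox n m Θ γ}

/-- For every sufficiently large t there are x ∈ ℤ^m \ {0}, y ∈ ℤ^n with
|x|_∞ ≤ t and |Θx − y|_∞ ≤ t^{−γ}. -/
def UnifOrdApprox (n m : ℕ) (Θ : Matrix (Fin n) (Fin m) ℝ) (γ : ℝ) : Prop :=
  ∀ᶠ t : ℝ in Filter.atTop, ∃ x : Fin m → ℤ, ∃ y : Fin n → ℤ, x ≠ 0 ∧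
    ‖ivec x‖ ≤ t ∧ ‖Θ.mulVec (ivec x) - ivec y‖ ≤ t ^ (-γ)

/-- The uniform (ordinary) Diophantine exponent α(Θ), as an extended real. -/
def oalpha (n m : ℕ) (Θ : Matrix (Fin n) (Fin m) ℝ) : EReal :=
  sSup {x : EReal | ∃ γ : ℝ, x = (γ : EReal) ∧ UnifOrdApprox n m Θ γ}

/-!
For `m = 1` one has `Π'(x) = max 1 |x|_∞` and `Π(z) ≤ |z|_∞`, whence `α ≤ α_×`.

Conversely let `0 < γ < α_×`. For a scale `s`, take `x` with `Π'(x) ≤ s^n` and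
`Π(Θx - y) ≤ s^{-nγ}`, and put `N = ⌊s^γ⌋`. The product of the `n` distances `|Θ_i x - y_i|` is
at most `N^{-n²}`, so at most `n - 1` of them exceed `N^{-n}`. Simultaneous Dirichlet approximation
on those coordinates gives `0 < k ≤ N^{n-1}` with all coordinates of `kΘx` within `1/N` of
integers (for the small ones trivially). Thus `kx` has norm at most `s^{n+(n-1)γ}` and error at most
`2 s^{-γ}`, so `α ≥ γ / (n + (n-1)γ)`; the three stated bounds follow by choosing `γ`.
-/

lemma pigeo_le_iff {k : ℕ} (hk : 0 < k) (z : Fin k → ℝ) {s : ℝ} (hs : 0 ≤ s) :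
    Pigeo z ≤ s ↔ ∏ i, |z i| ≤ s ^ k := by
  rw [Pigeo, one_div, Real.rpow_inv_le_iff_of_pos (by positivity) hs (by positivity),
    Real.rpow_natCast]

lemma exists_le_of_prod_le_pow {ι : Type*} [Fintype ι] [Nonempty ι] {z : ι → ℝ} {c : ℝ}
    (hc : 0 < c) (h : ∏ i, z i ≤ c ^ Fintype.card ι) : ∃ i, z i ≤ c := by
  by_contra! hlt
  have := Finset.prod_lt_prod_of_nonempty (fun _ _ => hc) (fun i _ => hlt i) Finset.univ_nonempty
  simp only [Finset.prod_const, Finset.card_univ] at this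
  linarith

theorem exists_nat_abs_mul_sub_le {ι : Type*} [Fintype ι] (β : ι → ℝ) {N : ℕ} (hN : 0 < N) :
    ∃ k : ℕ, 0 < k ∧ k ≤ N ^ Fintype.card ι ∧ ∃ Y : ι → ℤ, ∀ i, |k * β i - Y i| ≤ 1 / N := by
  classical
  have hNR : (0 : ℝ) < N := by exact_mod_cast hN
  let f : ℕ → ι → ℤ := fun j i => ⌊Int.fract (j * β i) * N⌋
  have hmaps : ∀ j ∈ Finset.range (N ^ Fintype.card ι + 1),
      f j ∈ Fintype.piFinset fun _ => Finset.Ico (0 : ℤ) N := by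
    intro j _
    simp only [Fintype.mem_piFinset, Finset.mem_Ico, Int.floor_nonneg, f]
    intro i
    refine ⟨by positivity, Int.floor_lt.2 ?_⟩
    exact_mod_cast mul_lt_of_lt_one_left hNR (Int.fract_lt_one _)
  have hcard : (Fintype.piFinset fun _ : ι => Finset.Ico (0 : ℤ) N).card <
      (Finset.range (N ^ Fintype.card ι + 1)).card := by
    simp
  obtain ⟨j₁, hj₁, j₂, hj₂, hne, hf⟩ := Finset.exists_ne_map_eq_of_card_lt_of_maps_to hcard hmaps
  wlog hlt : j₁ < j₂ generalizing j₁ j₂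
  · exact this j₂ hj₂ j₁ hj₁ hne.symm hf.symm (lt_of_le_of_ne (not_lt.1 hlt) hne.symm)
  refine ⟨j₂ - j₁, by omega, ?_, fun i => ⌊j₂ * β i⌋ - ⌊j₁ * β i⌋, fun i => ?_⟩
  · have := Finset.mem_range.1 hj₂
    omega
  · have hfloor := Int.abs_sub_lt_one_of_floor_eq_floor (congrFun hf i).symm
    rw [le_div_iff₀ hNR, ← abs_of_pos hNR, ← abs_mul]
    convert hfloor.le using 2
    push_cast [hlt.le]
    simp only [Int.fract]
    ring

lemma exists_nat_abs_mul_sub_le_of_prod_le {n N : ℕ} (hN : 0 < N) (β : Fin n → ℝ)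
    (y : Fin n → ℤ) (h : ∏ i, |β i - y i| ≤ ((N : ℝ) ^ n)⁻¹ ^ n) :
    ∃ k : ℕ, 0 < k ∧ k ≤ N ^ (n - 1) ∧ ∃ Y : Fin n → ℤ, ∀ i, |k * β i - Y i| ≤ 1 / N := by
  classical
  have hNR : (0 : ℝ) < N := by exact_mod_cast hN
  set K := N ^ (n - 1)
  set S := Finset.univ.filter fun i => 1 / (N : ℝ) < K * |β i - y i|
  have hS : S.card ≤ n - 1 := by
    rcases Nat.eq_zero_or_pos n with rfl | hn
    · simp [S]
    have : Nonempty (Fin n) := ⟨⟨0, hn⟩⟩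
    obtain ⟨i, hi⟩ := exists_le_of_prod_le_pow (c := ((N : ℝ) ^ n)⁻¹) (by positivity)
      (by rwa [Fintype.card_fin])
    have hiS : i ∉ S := by
      have hNK : (N : ℝ) * K = (N : ℝ) ^ n := by
        rw [Nat.cast_pow, ← pow_succ', Nat.sub_add_cancel hn]
      simp only [S, Finset.mem_filter, Finset.mem_univ, true_and, not_lt]
      have hK : (0 : ℝ) < K := by positivity
      calc (K : ℝ) * |β i - y i| ≤ K * ((N : ℝ) ^ n)⁻¹ := by gcongr
        _ = 1 / N := by rw [← hNK]; field_simp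
    have := Finset.card_lt_univ_of_notMem hiS
    rw [Fintype.card_fin] at this
    omega
  obtain ⟨k, hk, hkS, Y, hY⟩ := exists_nat_abs_mul_sub_le (fun i : S => β i) hN
  have hkK : k ≤ K := hkS.trans (Nat.pow_le_pow_right hN (by simpa using hS))
  refine ⟨k, hk, hkK, fun i => if hi : i ∈ S then Y ⟨i, hi⟩ else k * y i, fun i => ?_⟩
  dsimp only
  split_ifs with hi
  · exact hY ⟨i, hi⟩
  · simp only [S, Finset.mem_filter, Finset.mem_univ, true_and, not_lt] at hi
    calc |k * β i - ((k * y i : ℤ) : ℝ)| = k * |β i - y i| := by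
          push_cast; rw [← mul_sub, abs_mul, Nat.abs_cast]
      _ ≤ K * |β i - y i| := by gcongr
      _ ≤ 1 / N := hi

lemma exists_approx_of_pigeo_le {n m : ℕ} (hn : 0 < n) (Θ : Matrix (Fin n) (Fin m) ℝ)
    {x : Fin m → ℤ} (hx : x ≠ 0) (y : Fin n → ℤ) {u t : ℝ} (hu : 1 ≤ u)
    (hxt : ‖ivec x‖ ≤ t) (hxy : Pigeo (Θ *ᵥ ivec x - ivec y) ≤ (u ^ n)⁻¹) :
    ∃ x' : Fin m → ℤ, ∃ y' : Fin n → ℤ, x' ≠ 0 ∧ ‖ivec x'‖ ≤ u ^ (n - 1) * t ∧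
      ‖Θ *ᵥ ivec x' - ivec y'‖ ≤ 2 / u := by
  set N := ⌊u⌋₊
  have hN : 0 < N := Nat.floor_pos.2 hu
  have hNR : (1 : ℝ) ≤ N := by exact_mod_cast hN
  have hNu : (N : ℝ) ≤ u := Nat.floor_le (by positivity)
  have huN : u < 2 * N := by linarith [Nat.lt_floor_add_one u]
  have hprod : ∏ i, |(Θ *ᵥ ivec x) i - y i| ≤ ((N : ℝ) ^ n)⁻¹ ^ n := by
    rw [pigeo_le_iff hn _ (by positivity)] at hxy
    refine hxy.trans ?_
    gcongr
  obtain ⟨k, hk, hkN, Y, hY⟩ := exists_nat_abs_mul_sub_le_of_prod_le hN _ y hprod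
  have hivec : ivec ((k : ℤ) • x) = (k : ℝ) • ivec x := by
    ext; simp [ivec]
  refine ⟨(k : ℤ) • x, Y, smul_ne_zero (by exact_mod_cast hk.ne') hx, ?_, ?_⟩
  · have hku : (k : ℝ) ≤ u ^ (n - 1) :=
      calc (k : ℝ) ≤ (N : ℝ) ^ (n - 1) := by exact_mod_cast hkN
        _ ≤ u ^ (n - 1) := by gcongr
    rw [hivec, norm_smul, Real.norm_natCast]
    gcongr
  · rw [hivec, mulVec_smul]
    refine (pi_norm_le_iff_of_nonneg (by positivity)).2 fun i => ?_
    calc ‖((k : ℝ) • Θ *ᵥ ivec x - ivec Y) i‖ = |k * (Θ *ᵥ ivec x) i - Y i| := rfl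
      _ ≤ 1 / N := hY i
      _ ≤ 2 / u := by rw [div_le_div_iff₀ (by positivity) (by positivity)]; linarith

lemma pigeo_le_norm {k : ℕ} (hk : 0 < k) (z : Fin k → ℝ) : Pigeo z ≤ ‖z‖ := by
  rw [pigeo_le_iff hk z (norm_nonneg z)]
  calc ∏ i, |z i| ≤ ∏ _i : Fin k, ‖z‖ :=
        Finset.prod_le_prod (fun i _ => abs_nonneg _) fun i _ => norm_le_pi_norm z i
    _ = ‖z‖ ^ k := by simp

lemma pigeo'_eq_max_one_norm (z : Fin 1 → ℝ) : Pigeo' z = max 1 ‖z‖ := by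
  have hz : ‖z‖ = |z 0| := le_antisymm
    ((pi_norm_le_iff_of_nonneg (abs_nonneg _)).2 fun i => by rw [Subsingleton.elim i 0]; rfl)
    (norm_le_pi_norm z 0)
  simp [Pigeo', hz]

theorem UnifMultApprox.unifOrdApprox {n : ℕ} (hn : 0 < n) {Θ : Matrix (Fin n) (Fin 1) ℝ}
    {γ δ : ℝ} (H : UnifMultApprox n 1 Θ γ) (hγ : 0 < γ) (hδ : δ < γ / (n + (n - 1) * γ)) :
    UnifOrdApprox n 1 Θ δ := by
  have hn1 : (1 : ℝ) ≤ n := by exact_mod_cast hn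
  set d : ℝ := n + (n - 1) * γ
  have hd : 0 < d := by positivity
  have hδd : 0 < γ - d * δ := by
    rw [lt_div_iff₀ hd] at hδ
    linarith
  have hs : ∀ᶠ s : ℝ in atTop, ∃ x : Fin 1 → ℤ, ∃ y : Fin n → ℤ, x ≠ 0 ∧
      ‖ivec x‖ ≤ s ^ d ∧ ‖Θ *ᵥ ivec x - ivec y‖ ≤ (s ^ d) ^ (-δ) := by
    filter_upwards [(tendsto_rpow_atTop (by positivity : (0 : ℝ) < n)).eventually H,
      eventually_ge_atTop 1, (tendsto_rpow_atTop hδd).eventually_ge_atTop 2]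
      with s ⟨x, y, hx, hxt, hxy⟩ hs1 hs2
    have hs0 : 0 < s := by linarith
    have hxy' : Pigeo (Θ *ᵥ ivec x - ivec y) ≤ ((s ^ γ) ^ n)⁻¹ := by
      refine hxy.trans_eq ?_
      rw [← Real.rpow_natCast (s ^ γ), ← Real.rpow_mul hs0.le, ← Real.rpow_mul hs0.le,
        ← Real.rpow_neg hs0.le]
      ring_nf
    have hxt' : ‖ivec x‖ ≤ s ^ (n : ℝ) :=
      (le_max_right _ _).trans ((pigeo'_eq_max_one_norm _).symm.trans_le hxt)
    obtain ⟨x', y', hx', hx't, hx'y'⟩ :=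
      exists_approx_of_pigeo_le hn Θ hx y (Real.one_le_rpow hs1 hγ.le) hxt' hxy'
    refine ⟨x', y', hx', hx't.trans_eq ?_, hx'y'.trans ?_⟩
    · rw [← Real.rpow_natCast, ← Real.rpow_mul hs0.le, ← Real.rpow_add hs0,
        Nat.cast_sub hn, Nat.cast_one]
      congr 1
      ring
    · rw [← Real.rpow_mul hs0.le, div_le_iff₀ (by positivity), ← Real.rpow_add hs0]
      convert hs2 using 2
      ring
  filter_upwards [(tendsto_rpow_atTop (inv_pos.2 hd)).eventually hs, eventually_ge_atTop 0]
    with T hT hT0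
  rwa [Real.rpow_inv_rpow hT0 hd.ne'] at hT

section Exponents

variable {n m : ℕ} {Θ : Matrix (Fin n) (Fin m) ℝ}

lemma UnifMultApprox.mono {γ γ' : ℝ} (H : UnifMultApprox n m Θ γ') (h : γ ≤ γ') :
    UnifMultApprox n m Θ γ := by
  filter_upwards [H, eventually_ge_atTop 1] with t ⟨x, y, hx, hxt, hxy⟩ ht
  exact ⟨x, y, hx, hxt, hxy.trans (Real.rpow_le_rpow_of_exponent_le ht (neg_le_neg h))⟩

lemma unifMultApprox_of_coe_lt_malpha {γ : ℝ} (h : (γ : EReal) < malpha n m Θ) :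
    UnifMultApprox n m Θ γ := by
  obtain ⟨_, ⟨γ', rfl, hγ'⟩, hlt⟩ := lt_sSup_iff.1 h
  exact hγ'.mono (EReal.coe_le_coe_iff.1 hlt.le)

lemma coe_le_oalpha_of_forall_lt {c : ℝ} (h : ∀ δ < c, UnifOrdApprox n m Θ δ) :
    (c : EReal) ≤ oalpha n m Θ :=
  EReal.ge_of_forall_gt_iff_ge.1 fun δ hδ => le_sSup ⟨δ, rfl, h δ (EReal.coe_lt_coe_iff.1 hδ)⟩

end Exponents

lemma unifOrdApprox_zero {n : ℕ} (Θ : Matrix (Fin n) (Fin 1) ℝ) : UnifOrdApprox n 1 Θ 0 := by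
  filter_upwards [eventually_ge_atTop 1] with t ht
  refine ⟨1, fun i => round (Θ i 0), one_ne_zero, ?_, ?_⟩
  · have : ivec (1 : Fin 1 → ℤ) = 1 := by ext; simp [ivec]
    rwa [this, norm_one]
  · rw [neg_zero, Real.rpow_zero]
    refine (pi_norm_le_iff_of_nonneg zero_le_one).2 fun i => ?_
    have hi : (Θ *ᵥ ivec 1 - ivec fun i => round (Θ i 0)) i = Θ i 0 - round (Θ i 0) := by
      simp [mulVec, ivec, dotProduct]
    rw [hi, Real.norm_eq_abs]
    linarith [abs_sub_round (Θ i 0)]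

lemma oalpha_nonneg {n : ℕ} (Θ : Matrix (Fin n) (Fin 1) ℝ) : 0 ≤ oalpha n 1 Θ :=
  le_sSup ⟨0, rfl, unifOrdApprox_zero Θ⟩

lemma UnifOrdApprox.unifMultApprox {n : ℕ} (hn : 0 < n) {Θ : Matrix (Fin n) (Fin 1) ℝ} {γ : ℝ}
    (H : UnifOrdApprox n 1 Θ γ) : UnifMultApprox n 1 Θ γ := by
  filter_upwards [H, eventually_ge_atTop 1] with t ⟨x, y, hx, hxt, hxy⟩ ht
  exact ⟨x, y, hx, (pigeo'_eq_max_one_norm _).trans_le (max_le ht hxt),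
    (pigeo_le_norm hn _).trans hxy⟩

lemma oalpha_le_malpha {n : ℕ} (hn : 0 < n) (Θ : Matrix (Fin n) (Fin 1) ℝ) :
    oalpha n 1 Θ ≤ malpha n 1 Θ :=
  sSup_le_sSup fun _ ⟨γ, hγ, H⟩ => ⟨γ, hγ, H.unifMultApprox hn⟩

lemma coe_div_le_oalpha {n : ℕ} (hn : 0 < n) {Θ : Matrix (Fin n) (Fin 1) ℝ} {γ : ℝ}
    (hγ : 0 < γ) (h : (γ : EReal) < malpha n 1 Θ) :
    ((γ / (n + (n - 1) * γ) : ℝ) : EReal) ≤ oalpha n 1 Θ :=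
  coe_le_oalpha_of_forall_lt fun _ hδ =>
    (unifMultApprox_of_coe_lt_malpha h).unifOrdApprox hn hγ hδ

section ExponentBounds

variable {n : ℕ} {Θ : Matrix (Fin n) (Fin 1) ℝ}

lemma malpha_nonneg (hn : 0 < n) : 0 ≤ malpha n 1 Θ :=
  (oalpha_nonneg Θ).trans (oalpha_le_malpha hn Θ)

/-- The bound is `γ / (n + (n - 1) γ)` at `γ = α_× - 1/n`, so it is beaten by
`coe_div_le_oalpha` at `γ = α_× - 1/(2n)`. -/
lemma oalpha_ge_of_malpha_ne_top (hn : 0 < n) (h : malpha n 1 Θ ≠ ⊤) :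
    ((((n : ℝ) * (malpha n 1 Θ).toReal - 1) /
      ((n : ℝ) * ((n : ℝ) - 1) * (malpha n 1 Θ).toReal + (n : ℝ) ^ 2 - n + 1) : ℝ) : EReal) ≤
      oalpha n 1 Θ := by
  have hn1 : (1 : ℝ) ≤ n := by exact_mod_cast hn
  set a := (malpha n 1 Θ).toReal
  have ha : 0 ≤ a := EReal.toReal_nonneg (malpha_nonneg hn)
  have hma : malpha n 1 Θ = a :=
    (EReal.coe_toReal h (ne_bot_of_le_ne_bot EReal.zero_ne_bot (malpha_nonneg hn))).symm
  set D := (n : ℝ) * (n - 1) * a + n ^ 2 - n + 1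
  have hD : 0 < D := by
    have : 0 ≤ (n : ℝ) - 1 := by linarith
    have : 0 ≤ (n : ℝ) * (n - 1) * a := by positivity
    nlinarith
  rcases le_or_gt ((n : ℝ) * a) 1 with hna | hna
  · exact (EReal.coe_nonpos.2 (div_nonpos_of_nonpos_of_nonneg (by linarith) hD.le)).trans
      (oalpha_nonneg Θ)
  set γ := a - 1 / (2 * n)
  have hγ : 0 < γ := by
    rw [sub_pos, div_lt_iff₀ (by positivity)]
    linarith
  have hγa : γ < a := sub_lt_self a (by positivity)
  refine le_trans ?_ (coe_div_le_oalpha hn hγ (hma ▸ EReal.coe_lt_coe_iff.2 hγa))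
  have hγD : γ * D = (n * a - 1) * (n + (n - 1) * γ) + n / 2 := by
    simp only [γ, D]
    field_simp
    ring
  rw [EReal.coe_le_coe_iff, div_le_div_iff₀ hD (by positivity)]
  linarith

lemma oalpha_eq_top_of_malpha_eq_top {Θ : Matrix (Fin 1) (Fin 1) ℝ} (h : malpha 1 1 Θ = ⊤) :
    oalpha 1 1 Θ = ⊤ := by
  refine top_le_iff.1 (EReal.ge_of_forall_gt_iff_ge.1 fun z _ => ?_)
  have hγ : (0 : ℝ) < max z 1 := lt_max_of_lt_right one_pos
  have := coe_div_le_oalpha one_pos hγ (h ▸ EReal.coe_lt_top _)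
  norm_num at this
  exact (EReal.coe_le_coe_iff.2 (le_max_left z 1)).trans this

lemma oalpha_ge_of_malpha_eq_top (hn : 2 ≤ n) (h : malpha n 1 Θ = ⊤) :
    (((1 : ℝ) / ((n : ℝ) * ((n : ℝ) - 1)) : ℝ) : EReal) ≤ oalpha n 1 Θ := by
  have hn2 : (2 : ℝ) ≤ n := by exact_mod_cast hn
  refine le_trans ?_ (coe_div_le_oalpha (by omega) (by positivity) (h ▸ EReal.coe_lt_top n))
  have : 0 ≤ (n : ℝ) * n * (n - 2) := mul_nonneg (by positivity) (by linarith)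
  rw [EReal.coe_le_coe_iff, div_le_div_iff₀ (by nlinarith) (by nlinarith)]
  nlinarith

end ExponentBounds

/-- Corollary 9: for m = 1, α_×(Θ) ≥ α(Θ) ≥ (n α_×(Θ) − 1)/(n(n−1) α_×(Θ) + n² − n + 1),
where for α_×(Θ) = +∞ the lower bound is read as 1/(n(n−1)) if n ≥ 2, and as +∞ if n = 1. -/
theorem oalpha_between_malpha (n : ℕ) (hn : 0 < n)
    (Θ : Matrix (Fin n) (Fin 1) ℝ) :
    malpha n 1 Θ ≥ oalpha n 1 Θ ∧
    (malpha n 1 Θ ≠ ⊤ →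
      oalpha n 1 Θ ≥ ((((n : ℝ) * (malpha n 1 Θ).toReal - 1) /
        ((n : ℝ) * ((n : ℝ) - 1) * (malpha n 1 Θ).toReal + (n : ℝ)^2 - n + 1) : ℝ) : EReal)) ∧
    (malpha n 1 Θ = ⊤ → n = 1 → oalpha n 1 Θ = ⊤) ∧
    (malpha n 1 Θ = ⊤ → 2 ≤ n →
      oalpha n 1 Θ ≥ (((1 : ℝ) / ((n : ℝ) * ((n : ℝ) - 1)) : ℝ) : EReal)) := by
  refine ⟨oalpha_le_malpha hn Θ, oalpha_ge_of_malpha_ne_top hn, ?_,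
    fun h hn2 => oalpha_ge_of_malpha_eq_top hn2 h⟩
  rintro h rfl
  exact oalpha_eq_top_of_malpha_eq_top h
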